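/- arXiv:1711.05508 — 2 statements merged into one kernel-verified Lean document; each statement's English description precedes it below -/
import Mathlib

section
/- Let ⟨K,B,P,N⟩_R be a DPI, D a set of minimal diagnoses w.r.t. it, and dx a set with ∅ ⊂ dx ⊂ D. Then (K \ U_dx) ∩ Disc_D = U_D \ U_dx, i.e., the canonical query w.r.t. the seed dx (when defined) equals U_D \ U_dx, which in turn equals the union of the traits D_i \ U_dx over all D_i ∈ D \ dx. -/
namespace KBDDiag

/-- A diagnosis problem instance (DPI) `⟨K,B,P,N⟩_R` over a Tarskian logic on sentences `L`. -/
structure DPI (L : Type*) where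
  /-- the entailment relation of the logic -/
  entails : Set L → L → Prop
  /-- entailment is monotonic -/
  entails_mono : ∀ (X Y : Set L) (α : L), entails X α → entails (X ∪ Y) α
  /-- entailment is idempotent -/
  entails_idem : ∀ (X A : Set L) (β : L),
    (∀ α ∈ A, entails X α) → entails (X ∪ A) β → entails X β
  /-- entailment is extensive -/
  entails_ext : ∀ (X : Set L) (α : L), α ∈ X → entails X α
  /-- the (possibly faulty) KB -/
  K : Set L
  /-- the background KB -/
  B : Set L
  /-- the positive test cases -/
  P : Set (Set L)
  /-- the negative test cases -/
  N : Set (Set L)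
  /-- requirements: `r X` means the KB `X` satisfies requirement `r` -/
  R : Set (Set L → Prop)
  K_finite : K.Finite
  B_finite : B.Finite
  K_B_disjoint : K ∩ B = ∅
  P_finite : P.Finite
  P_mem_finite : ∀ p ∈ P, Set.Finite p
  N_finite : N.Finite
  N_mem_finite : ∀ n ∈ N, Set.Finite n
  /-- violation of a requirement is monotone -/
  viol_mono : ∀ r ∈ R, ∀ X Y : Set L, X ⊆ Y → ¬ r X → ¬ r Y
  /-- requirements are preserved under adding entailed sentences -/
  sat_entailed : ∀ r ∈ R, ∀ X A : Set L, r X → (∀ α ∈ A, entails X α) → r (X ∪ A)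
  /-- the background KB satisfies every requirement -/
  B_sat : ∀ r ∈ R, r B

namespace DPI

variable {L : Type*} (d : DPI L)

/-- `X ⊨ Y` : X entails every sentence of Y. -/
def EntailsAll (X Y : Set L) : Prop := ∀ α ∈ Y, d.entails X α

/-- `U_P`, the union of all positive test cases. -/
def UP : Set L := ⋃₀ d.P

/-- `Ks` is a solution KB w.r.t. the DPI. -/
def IsSolutionKB (Ks : Set L) : Prop :=
  (∀ r ∈ d.R, r (Ks ∪ d.B)) ∧
  (∀ p ∈ d.P, d.EntailsAll (Ks ∪ d.B) p) ∧
  (∀ n ∈ d.N, ¬ d.EntailsAll (Ks ∪ d.B) n)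

/-- `D` is a diagnosis w.r.t. the DPI. -/
def IsDiagnosis (D : Set L) : Prop :=
  D ⊆ d.K ∧ d.IsSolutionKB ((d.K \ D) ∪ d.UP)

/-- `D` is a minimal diagnosis w.r.t. the DPI. -/
def IsMinDiagnosis (D : Set L) : Prop :=
  d.IsDiagnosis D ∧ ∀ D' ⊂ D, ¬ d.IsDiagnosis D'

/-- `C` is a conflict w.r.t. the DPI. -/
def IsConflict (C : Set L) : Prop :=
  C ⊆ d.K ∧ ¬ d.IsSolutionKB (C ∪ d.UP)

/-- `C` is a minimal conflict w.r.t. the DPI. -/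
def IsMinConflict (C : Set L) : Prop :=
  d.IsConflict C ∧ ∀ C' ⊂ C, ¬ d.IsConflict C'

/-- `Ks` is a maximal solution KB w.r.t. the DPI. -/
def IsMaxSolutionKB (Ks : Set L) : Prop :=
  d.IsSolutionKB Ks ∧ ¬ ∃ K' : Set L, d.IsSolutionKB K' ∧ Ks ∩ d.K ⊂ K' ∩ d.K

/-- `K*_i = (K \ D_i) ∪ B ∪ U_P`. -/
def Kstar (Di : Set L) : Set L := (d.K \ Di) ∪ d.B ∪ d.UP

/-- `X` violates some requirement in `R` or entails some negative test case. -/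
def Violates (X : Set L) : Prop :=
  (∃ r ∈ d.R, ¬ r X) ∨ (∃ n ∈ d.N, d.EntailsAll X n)

/-- `dx(X)` w.r.t. the leading diagnoses `Ds`. -/
def dxS (Ds : Set (Set L)) (X : Set L) : Set (Set L) :=
  {Di ∈ Ds | d.EntailsAll (d.Kstar Di) X}

/-- `dnx(X)` w.r.t. the leading diagnoses `Ds`. -/
def dnxS (Ds : Set (Set L)) (X : Set L) : Set (Set L) :=
  {Di ∈ Ds | d.Violates (d.Kstar Di ∪ X)}

/-- `dz(X)` w.r.t. the leading diagnoses `Ds`. -/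
def dzS (Ds : Set (Set L)) (X : Set L) : Set (Set L) :=
  Ds \ (d.dxS Ds X ∪ d.dnxS Ds X)

/-- `Q` is a query w.r.t. the leading diagnoses `Ds`. -/
def IsQuery (Ds : Set (Set L)) (Q : Set L) : Prop :=
  Q.Nonempty ∧ (d.dxS Ds Q).Nonempty ∧ (d.dnxS Ds Q).Nonempty

/-- The canonical query `Q_can(S) = (K \ U_S) ∩ (U_D \ I_D)` w.r.t. the seed `S`. -/
def Qcan (Ds S : Set (Set L)) : Set L := (d.K \ ⋃₀ S) ∩ (⋃₀ Ds \ ⋂₀ Ds)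

/-- `⟨dxp, dnxp, ∅⟩` is a canonical q-partition of `Ds`. -/
def IsCanonicalQPartition (Ds dxp dnxp : Set (Set L)) : Prop :=
  dxp ∪ dnxp = Ds ∧ dxp ∩ dnxp = ∅ ∧
  dxp.Nonempty ∧ dxp ⊂ Ds ∧
  (d.Qcan Ds dxp).Nonempty ∧
  d.dxS Ds (d.Qcan Ds dxp) = dxp ∧
  d.dnxS Ds (d.Qcan Ds dxp) = dnxp ∧
  d.dzS Ds (d.Qcan Ds dxp) = ∅

end DPI

/-- `Disc_D = U_D \ I_D`, the discrimination sentences w.r.t. `Ds`. -/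
def Disc {L : Type*} (Ds : Set (Set L)) : Set L := ⋃₀ Ds \ ⋂₀ Ds

/-- `H` is a hitting set of the collection `S`. -/
def IsHittingSet {α : Type*} (S : Set (Set α)) (H : Set α) : Prop :=
  H ⊆ ⋃₀ S ∧ ∀ s ∈ S, (H ∩ s).Nonempty

/-- `H` is a minimal hitting set of the collection `S`. -/
def IsMinHittingSet {α : Type*} (S : Set (Set α)) (H : Set α) : Prop :=
  IsHittingSet S H ∧ ∀ H' ⊂ H, ¬ IsHittingSet S H'

/-- `MHS S`, the set of all minimal hitting sets of `S`. -/
def MHS {α : Type*} (S : Set (Set α)) : Set (Set α) :=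
  {H | IsMinHittingSet S H}

theorem sInter_subset_sUnion_of_subset {α : Type*} {S T : Set (Set α)} (hS : S.Nonempty)
    (hST : S ⊆ T) : ⋂₀ T ⊆ ⋃₀ S := by
  obtain ⟨s, hs⟩ := hS
  exact (Set.sInter_subset_of_mem (hST hs)).trans (Set.subset_sUnion_of_mem hs)

theorem sUnion_diff_sUnion_eq_biUnion_diff {α : Type*} (T S : Set (Set α)) :
    ⋃₀ T \ ⋃₀ S = ⋃ t ∈ T \ S, (t \ ⋃₀ S) := by
  ext a
  simp only [Set.mem_sdiff, Set.mem_sUnion, Set.mem_iUnion, exists_prop]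
  constructor
  · rintro ⟨⟨t, ht, hat⟩, haS⟩
    exact ⟨t, ⟨ht, fun htS => haS ⟨t, htS, hat⟩⟩, hat, haS⟩
  · rintro ⟨t, ⟨ht, -⟩, hat, haS⟩
    exact ⟨⟨t, ht, hat⟩, haS⟩

namespace DPI

variable {L : Type*} (d : DPI L)

theorem Qcan_eq_sUnion_diff_sUnion {Ds S : Set (Set L)} (hK : ⋃₀ Ds ⊆ d.K)
    (hI : ⋂₀ Ds ⊆ ⋃₀ S) : d.Qcan Ds S = ⋃₀ Ds \ ⋃₀ S := by
  ext a
  simp only [Qcan, Set.mem_inter_iff, Set.mem_sdiff]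
  constructor
  · rintro ⟨⟨-, haS⟩, haD, -⟩
    exact ⟨haD, haS⟩
  · rintro ⟨haD, haS⟩
    exact ⟨⟨hK haD, haS⟩, haD, fun haI => haS (hI haI)⟩

end DPI

/-- For `∅ ⊂ dxp ⊂ Ds`, `(K \ U_dxp) ∩ Disc_D = U_Ds \ U_dxp`, which equals
the union of the traits `Di \ U_dxp` over all `Di ∈ Ds \ dxp`. -/
theorem statement16 {L : Type*} (d : DPI L) (Ds : Set (Set L))
    (hDs : ∀ Di ∈ Ds, d.IsMinDiagnosis Di)
    (dxp : Set (Set L)) (hne : dxp.Nonempty) (hss : dxp ⊂ Ds) :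
    d.Qcan Ds dxp = ⋃₀ Ds \ ⋃₀ dxp ∧
    ⋃₀ Ds \ ⋃₀ dxp = ⋃ Di ∈ Ds \ dxp, (Di \ ⋃₀ dxp) := by
  have hK : ⋃₀ Ds ⊆ d.K := Set.sUnion_subset fun Di hDi => (hDs Di hDi).1.1
  exact ⟨d.Qcan_eq_sUnion_diff_sUnion hK (sInter_subset_sUnion_of_subset hne hss.subset),
    sUnion_diff_sUnion_eq_biUnion_diff Ds dxp⟩

end KBDDiag
end

section
/- Let ⟨K,B,P,N⟩_R be a DPI, D a set of minimal diagnoses w.r.t. it, and P = ⟨dx, dnx, ∅⟩ a q-partition w.r.t. D (i.e., the q-partition of some query w.r.t. D). Then for every Q ⊆ Disc_D: Q is a query w.r.t. D whose q-partition equals P if and only if there exists a minimal hitting set H ∈ MHS(dnx) with H ⊆ Q ⊆ Q_can(dx). -/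
namespace KBDDiag

/-! For `Q ⊆ K` and minimal diagnoses, `dx(Q)` consists exactly of the leading diagnoses disjoint
from `Q` and `dnx(Q)` of those meeting `Q`: if `Q` meets `Dᵢ`, then `Dᵢ \ Q` is no diagnosis by
minimality, and its `K*` lies inside `K*ᵢ ∪ Q`. So `dz(Q) = ∅`, and `Q` has the q-partition
`⟨dxp, dnxp, ∅⟩` iff it avoids every member of `dxp` and meets every member of `dnxp`, i.e. iff
`Q ⊆ Q_can(dxp)` and `Q` contains a minimal hitting set of `dnxp`. -/

theorem sep_eq_and_sep_not_eq_iff {α : Type*} {s A B : Set α} (hAB : A ∪ B = s)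
    (p : α → Prop) :
    ({x ∈ s | p x} = A ∧ {x ∈ s | ¬ p x} = B) ↔ (∀ x ∈ A, p x) ∧ ∀ x ∈ B, ¬ p x := by
  subst hAB
  constructor
  · rintro ⟨hA, hB⟩
    exact ⟨fun x hx => (hA.symm ▸ hx : x ∈ {x ∈ A ∪ B | p x}).2,
      fun x hx => (hB.symm ▸ hx : x ∈ {x ∈ A ∪ B | ¬ p x}).2⟩
  · rintro ⟨hA, hB⟩
    refine ⟨Set.ext fun x => ⟨?_, fun hx => ⟨Or.inl hx, hA x hx⟩⟩,
      Set.ext fun x => ⟨?_, fun hx => ⟨Or.inr hx, hB x hx⟩⟩⟩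
    · rintro ⟨hx | hx, hpx⟩
      exacts [hx, absurd hpx (hB x hx)]
    · rintro ⟨hx | hx, hpx⟩
      exacts [absurd (hA x hx) hpx, hx]

theorem exists_minHittingSet_subset {α : Type*} {S : Set (Set α)} {H₀ : Set α}
    (hfin : H₀.Finite) (hH₀ : IsHittingSet S H₀) : ∃ H ∈ MHS S, H ⊆ H₀ := by
  set T : Set (Set α) := {H | H ⊆ H₀ ∧ IsHittingSet S H}
  have hT : T.Finite := hfin.finite_subsets.subset fun H hH => hH.1
  obtain ⟨H, hHH₀, hHmin⟩ := hT.isPWO.exists_le_minimal (a := H₀) ⟨subset_rfl, hH₀⟩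
  refine ⟨H, ⟨hHmin.prop.2, fun H' hH' hhit => ?_⟩, hHH₀⟩
  exact hH'.2 (hHmin.2 ⟨hH'.1.trans hHH₀, hhit⟩ hH'.1)

theorem exists_mem_MHS_subset_iff {α : Type*} {S : Set (Set α)} {Q : Set α} (hQ : Q.Finite) :
    (∃ H ∈ MHS S, H ⊆ Q) ↔ ∀ s ∈ S, ¬ Disjoint Q s := by
  simp only [Set.not_disjoint_iff_nonempty_inter]
  constructor
  · rintro ⟨H, ⟨⟨-, hhit⟩, -⟩, hHQ⟩ s hs
    exact (hhit s hs).mono (Set.inter_subset_inter_left s hHQ)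
  · intro hhit
    refine (exists_minHittingSet_subset (hQ.subset Set.inter_subset_left)
      ⟨Set.inter_subset_right, fun s hs => ?_⟩).imp fun H ⟨hH, hHQ⟩ =>
        ⟨hH, hHQ.trans Set.inter_subset_left⟩
    obtain ⟨x, hxQ, hxs⟩ := hhit s hs
    exact ⟨x, ⟨hxQ, s, hs, hxs⟩, hxs⟩

namespace DPI

variable {L : Type*} (d : DPI L)

theorem entailsAll_of_subset {X Y : Set L} (h : Y ⊆ X) : d.EntailsAll X Y :=
  fun α hα => d.entails_ext X α (h hα)

variable {d} in
theorem Violates.mono {X Y : Set L} (hXY : X ⊆ Y) (hX : d.Violates X) : d.Violates Y := by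
  rcases hX with ⟨r, hr, hrX⟩ | ⟨n, hn, hnX⟩
  · exact Or.inl ⟨r, hr, d.viol_mono r hr X Y hXY hrX⟩
  · refine Or.inr ⟨n, hn, fun α hα => ?_⟩
    simpa [Set.union_eq_self_of_subset_left hXY] using d.entails_mono X Y α (hnX α hα)

theorem not_violates_union_of_entailsAll {X A : Set L} (hX : ¬ d.Violates X)
    (hA : d.EntailsAll X A) : ¬ d.Violates (X ∪ A) := by
  rintro (⟨r, hr, hrXA⟩ | ⟨n, hn, hnXA⟩)
  · exact hX (Or.inl ⟨r, hr, fun hrX => hrXA (d.sat_entailed r hr X A hrX hA)⟩)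
  · exact hX (Or.inr ⟨n, hn, fun β hβ => d.entails_idem X A β hA (hnXA β hβ)⟩)

theorem isDiagnosis_iff {D : Set L} : d.IsDiagnosis D ↔ D ⊆ d.K ∧ ¬ d.Violates (d.Kstar D) := by
  have hKstar : (d.K \ D ∪ d.UP) ∪ d.B = d.Kstar D := Set.union_right_comm _ _ _
  have hP : ∀ p ∈ d.P, d.EntailsAll (d.Kstar D) p :=
    fun p hp => d.entailsAll_of_subset fun α hα => Or.inr ⟨p, hp, hα⟩
  simp only [IsDiagnosis, IsSolutionKB, hKstar, Violates, not_or, not_exists, not_and, not_not]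
  rw [and_iff_right hP]

theorem disc_subset_K {Ds : Set (Set L)} (hDs : ∀ Di ∈ Ds, d.IsDiagnosis Di) :
    Disc Ds ⊆ d.K :=
  Set.sdiff_subset.trans (Set.sUnion_subset fun Di hDi => (hDs Di hDi).1)

theorem subset_Qcan_iff {Ds S : Set (Set L)} {Q : Set L} :
    Q ⊆ d.Qcan Ds S ↔ Q ⊆ d.K ∧ Q ⊆ Disc Ds ∧ ∀ Di ∈ S, Disjoint Q Di := by
  simp only [Qcan, Disc, Set.subset_inter_iff, Set.subset_sdiff, Set.disjoint_sUnion_right]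
  tauto

variable {Ds : Set (Set L)} {Di Q : Set L}

theorem mem_dxS_of_disjoint (hDi : Di ∈ Ds) (hQK : Q ⊆ d.K) (hQDi : Disjoint Q Di) :
    Di ∈ d.dxS Ds Q :=
  ⟨hDi, d.entailsAll_of_subset fun _ hα =>
    Or.inl (Or.inl ⟨hQK hα, hQDi.notMem_of_mem_left hα⟩)⟩

theorem mem_dnxS_of_not_disjoint (hDi : Di ∈ Ds) (hmin : d.IsMinDiagnosis Di)
    (hQDi : ¬ Disjoint Q Di) : Di ∈ d.dnxS Ds Q := by
  have hssub : Di \ Q ⊂ Di := Set.sdiff_ssubset_left_iff.2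
    (Set.inter_comm Q Di ▸ Set.not_disjoint_iff_nonempty_inter.1 hQDi)
  have hviol : d.Violates (d.Kstar (Di \ Q)) := by
    by_contra h
    exact hmin.2 _ hssub (d.isDiagnosis_iff.2 ⟨Set.sdiff_subset.trans hmin.1.1, h⟩)
  refine ⟨hDi, hviol.mono fun x hx => ?_⟩
  simp only [Kstar, Set.mem_union, Set.mem_sdiff] at hx ⊢
  tauto

theorem notMem_dnxS_of_mem_dxS (hdiag : d.IsDiagnosis Di) (hx : Di ∈ d.dxS Ds Q) :
    Di ∉ d.dnxS Ds Q :=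
  fun hnx => d.not_violates_union_of_entailsAll (d.isDiagnosis_iff.1 hdiag).2 hx.2 hnx.2

theorem dxS_union_dnxS_of_dzS_eq_empty {X : Set L} (hdz : d.dzS Ds X = ∅) :
    d.dxS Ds X ∪ d.dnxS Ds X = Ds :=
  (Set.union_subset (fun _ h => h.1) fun _ h => h.1).antisymm (Set.sdiff_eq_empty.1 hdz)

section SubsetK

variable (hDs : ∀ Di ∈ Ds, d.IsMinDiagnosis Di) (hQK : Q ⊆ d.K)
include hDs hQK

theorem dxS_eq_sep : d.dxS Ds Q = {Di ∈ Ds | Disjoint Q Di} := by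
  ext Di
  refine ⟨fun hx => ⟨hx.1, ?_⟩, fun ⟨hDi, hQDi⟩ => d.mem_dxS_of_disjoint hDi hQK hQDi⟩
  by_contra hQDi
  exact d.notMem_dnxS_of_mem_dxS (hDs Di hx.1).1 hx
    (d.mem_dnxS_of_not_disjoint hx.1 (hDs Di hx.1) hQDi)

theorem dnxS_eq_sep : d.dnxS Ds Q = {Di ∈ Ds | ¬ Disjoint Q Di} := by
  ext Di
  refine ⟨fun hnx => ⟨hnx.1, fun hQDi => ?_⟩,
    fun ⟨hDi, hQDi⟩ => d.mem_dnxS_of_not_disjoint hDi (hDs Di hDi) hQDi⟩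
  exact d.notMem_dnxS_of_mem_dxS (hDs Di hnx.1).1 (d.mem_dxS_of_disjoint hnx.1 hQK hQDi) hnx

theorem dzS_eq_empty : d.dzS Ds Q = ∅ := by
  rw [dzS, d.dxS_eq_sep hDs hQK, d.dnxS_eq_sep hDs hQK, Set.sdiff_eq_empty]
  exact fun Di hDi => (em (Disjoint Q Di)).imp (And.intro hDi) (And.intro hDi)

theorem isQuery_and_qPartition_eq_iff {A B : Set (Set L)} (hAB : A ∪ B = Ds) (hA : A.Nonempty)
    (hB : B.Nonempty) :
    (d.IsQuery Ds Q ∧ d.dxS Ds Q = A ∧ d.dnxS Ds Q = B ∧ d.dzS Ds Q = ∅) ↔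
      (∀ Di ∈ A, Disjoint Q Di) ∧ ∀ Di ∈ B, ¬ Disjoint Q Di := by
  rw [IsQuery, d.dxS_eq_sep hDs hQK, d.dnxS_eq_sep hDs hQK,
    ← sep_eq_and_sep_not_eq_iff hAB]
  refine ⟨fun ⟨_, hxA, hnxB, _⟩ => ⟨hxA, hnxB⟩, fun ⟨hxA, hnxB⟩ => ?_⟩
  obtain ⟨Di, hDi⟩ := hB
  obtain ⟨x, hxQ, -⟩ :=
    Set.not_disjoint_iff.1 (hnxB.symm ▸ hDi : Di ∈ {Di ∈ Ds | ¬ Disjoint Q Di}).2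
  exact ⟨⟨⟨x, hxQ⟩, hxA ▸ hA, hnxB ▸ ⟨Di, hDi⟩⟩, hxA, hnxB, d.dzS_eq_empty hDs hQK⟩

end SubsetK

end DPI

/-- For a q-partition `P = ⟨dxp, dnxp, ∅⟩` of some query w.r.t. `Ds` and any
`Q ⊆ Disc_D`: `Q` is a query with q-partition `P` iff some `H ∈ MHS(dnxp)` satisfies
`H ⊆ Q ⊆ Q_can(dxp)`. -/
theorem statement17 {L : Type*} (d : DPI L) (Ds : Set (Set L))
    (hDs : ∀ Di ∈ Ds, d.IsMinDiagnosis Di)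
    (dxp dnxp : Set (Set L))
    (hP : ∃ Q0 : Set L, d.IsQuery Ds Q0 ∧ d.dxS Ds Q0 = dxp ∧ d.dnxS Ds Q0 = dnxp ∧
      d.dzS Ds Q0 = ∅)
    (Q : Set L) (hQ : Q ⊆ Disc Ds) :
    (d.IsQuery Ds Q ∧ d.dxS Ds Q = dxp ∧ d.dnxS Ds Q = dnxp ∧ d.dzS Ds Q = ∅) ↔
      ∃ H ∈ MHS dnxp, H ⊆ Q ∧ Q ⊆ d.Qcan Ds dxp := by
  obtain ⟨Q0, ⟨-, hdx0, hdnx0⟩, rfl, rfl, hdz0⟩ := hP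
  have hdiag : ∀ Di ∈ Ds, d.IsDiagnosis Di := fun Di hDi => (hDs Di hDi).1
  have hQK : Q ⊆ d.K := hQ.trans (d.disc_subset_K hdiag)
  rw [d.isQuery_and_qPartition_eq_iff hDs hQK (d.dxS_union_dnxS_of_dzS_eq_empty hdz0) hdx0
    hdnx0]
  simp only [← and_assoc, exists_and_right, exists_mem_MHS_subset_iff (d.K_finite.subset hQK),
    d.subset_Qcan_iff]
  tauto

end KBDDiag
end
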